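/- arXiv:2410.10612 — 3 statements merged into one kernel-verified Lean document; each statement's English description precedes it below -/
import Mathlib

section
/- Let d ≥ 1, r > 0, let ν be a finite nonnegative Borel measure on 𝕋^d, let {y_m}_{m=1}^M ⊂ 𝕋^d be points with 𝕋^d ⊆ ∪_{m=1}^M B_r(y_m), and let {ζ_m}_{m=1}^M be a continuous partition of unity subordinate to this cover (each ζ_m ≥ 0 with support contained in B_r(y_m) and Σ_{m=1}^M ζ_m(y) = 1 for all y). Let g : 𝕋^d → ℝ be Lipschitz with a continuous r-local Lipschitz modulus h : 𝕋^d → [0,∞). Then for every y ∈ 𝕋^d both of the following hold: |g ∗ ν(y) − Σ_{m=1}^M g ∗ ν(y_m) ζ_m(y)| ≤ r · (h ∗ ν)(y), and |g ∗ ν(y) − Σ_{m=1}^M g ∗ ν(y_m) ζ_m(y)| ≤ r · Σ_{m=1}^M ζ_m(y) (h ∗ ν)(y_m). -/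
/-!
Since the weights `ζ m y` are nonnegative and sum to one, the interpolation error equals
`∑ m, ζ m y * (g ∗ ν (y) - g ∗ ν (y_m))`, and only indices with `|y - y_m|_𝕋 < r`
contribute.
For those, the local modulus bounds `g (y - y') - g (y_m - y')` pointwise by `r h (y - y')`
(using it at the base point `y - y'`) or by `r h (y_m - y')` (base point `y_m - y'`);
integrating in `y'` against `ν` gives the two estimates.
-/

open MeasureTheory Real Set
open scoped ENNReal BigOperators

noncomputable section

/-- Euclidean space ℝ^d. Points of the flat torus 𝕋^d = ℝ^d/ℤ^d are modelled by
representatives in ℝ^d, and functions on 𝕋^d by ℤ^d-periodic functions on ℝ^d. -/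
abbrev E (d : ℕ) := EuclideanSpace ℝ (Fin d)

/-- The lattice vector of ℤ^d associated to `k`. -/
def latVec (d : ℕ) (k : Fin d → ℤ) : E d := WithLp.toLp 2 (fun i => (k i : ℝ))

/-- The torus "norm" |x|_{𝕋^d} = inf_{k ∈ ℤ^d} |x + k|. -/
def tnorm (d : ℕ) (x : E d) : ℝ := ⨅ k : Fin d → ℤ, ‖x + latVec d k‖

/-- ℤ^d-periodicity: `f` descends to a function on the torus 𝕋^d. -/
def TPer {d : ℕ} {α : Type*} (f : E d → α) : Prop :=
  ∀ (x : E d) (k : Fin d → ℤ), f (x + latVec d k) = f x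

/-- The fundamental domain [-1/2, 1/2)^d of the torus. -/
def fundDom (d : ℕ) : Set (E d) := {x | ∀ i, x i ∈ Set.Ico (-(1/2) : ℝ) (1/2)}

/-- Supremum of a real-valued function over a set. -/
def supOn {d : ℕ} (s : Set (E d)) (f : E d → ℝ) : ℝ := sSup (f '' s)

/-- g is Lipschitz continuous on the torus. -/
def TLip {d : ℕ} (g : E d → ℝ) : Prop :=
  ∃ C : ℝ, ∀ x y : E d, |g x - g y| ≤ C * tnorm d (x - y)

/-- h is an r-local Lipschitz modulus for g:
|g(x) − g(y)| ≤ h(y)·|x−y|_{𝕋^d} whenever |x−y|_{𝕋^d} < r. -/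
def IsLocMod (d : ℕ) (r : ℝ) (g h : E d → ℝ) : Prop :=
  ∀ x y : E d, tnorm d (x - y) < r → |g x - g y| ≤ h y * tnorm d (x - y)

/-- Convolution of a function on the torus with a finite measure:
(g ∗ ν)(y) := ∫ g(y−y') dν(y'). -/
def convM (d : ℕ) (g : E d → ℝ) (ν : Measure (E d)) (y : E d) : ℝ :=
  ∫ y', g (y - y') ∂ν

lemma latVec_zero (d : ℕ) : latVec d 0 = 0 := by
  ext i; simp [latVec]

lemma latVec_neg (d : ℕ) (k : Fin d → ℤ) : latVec d (-k) = -latVec d k := by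
  ext i; simp [latVec]

lemma tnorm_le (d : ℕ) (x : E d) (k : Fin d → ℤ) : tnorm d x ≤ ‖x + latVec d k‖ :=
  ciInf_le ⟨0, by rintro _ ⟨k, rfl⟩; positivity⟩ k

lemma tnorm_nonneg (d : ℕ) (x : E d) : 0 ≤ tnorm d x :=
  le_ciInf fun _ => norm_nonneg _

lemma tnorm_le_norm (d : ℕ) (x : E d) : tnorm d x ≤ ‖x‖ := by
  simpa [latVec_zero] using tnorm_le d x 0

lemma tnorm_neg_le (d : ℕ) (x : E d) : tnorm d (-x) ≤ tnorm d x :=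
  le_ciInf fun k => by
    rw [← norm_neg, neg_add, ← latVec_neg]
    exact tnorm_le d (-x) (-k)

lemma tnorm_neg (d : ℕ) (x : E d) : tnorm d (-x) = tnorm d x :=
  le_antisymm (tnorm_neg_le d x) (by simpa using tnorm_neg_le d (-x))

lemma tnorm_sub_comm (d : ℕ) (x y : E d) : tnorm d (x - y) = tnorm d (y - x) := by
  rw [← neg_sub, tnorm_neg]

/-- Rounding each coordinate moves `x` into `[-1/2, 1/2]^d`. -/
lemma exists_norm_add_latVec_le_sqrt (d : ℕ) (x : E d) :
    ∃ k, ‖x + latVec d k‖ ≤ √d := by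
  refine ⟨fun i => -round (x i), ?_⟩
  have hcoord : ∀ i, ‖(x + latVec d fun i => -round (x i)) i‖ ^ 2 ≤ 1 := by
    intro i
    have hi : (x + latVec d fun i => -round (x i)) i = x i - round (x i) := by
      simp [latVec, sub_eq_add_neg]
    rw [hi, Real.norm_eq_abs]
    nlinarith [abs_sub_round (x i), abs_nonneg (x i - round (x i))]
  rw [EuclideanSpace.norm_eq]
  calc √(∑ i, ‖(x + latVec d fun i => -round (x i)) i‖ ^ 2)
      ≤ √(∑ _i : Fin d, (1 : ℝ)) :=
        Real.sqrt_le_sqrt (Finset.sum_le_sum fun i _ => hcoord i)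
    _ = √d := by simp

lemma TPer.exists_norm_le {d : ℕ} {F : Type*} [NormedAddCommGroup F] {f : E d → F}
    (hp : TPer f) (hc : Continuous f) : ∃ C, ∀ x, ‖f x‖ ≤ C := by
  obtain ⟨C, hC⟩ := (isCompact_closedBall (0 : E d) √d).exists_bound_of_continuousOn
    hc.continuousOn
  refine ⟨C, fun x => ?_⟩
  obtain ⟨k, hk⟩ := exists_norm_add_latVec_le_sqrt d x
  rw [← hp x k]
  exact hC _ (by simpa [Metric.mem_closedBall, dist_eq_norm] using hk)

lemma TPer.integrable_comp_sub {d : ℕ} {F : Type*} [NormedAddCommGroup F] {f : E d → F}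
    (hp : TPer f) (hc : Continuous f) (ν : Measure (E d)) [IsFiniteMeasure ν] (a : E d) :
    Integrable (fun y' => f (a - y')) ν := by
  obtain ⟨C, hC⟩ := hp.exists_norm_le hc
  exact Integrable.of_bound (hc.comp (continuous_const.sub continuous_id)).aestronglyMeasurable
    C (ae_of_all _ fun y' => hC (a - y'))

lemma TLip.continuous {d : ℕ} {g : E d → ℝ} (hg : TLip g) : Continuous g := by
  obtain ⟨C, hC⟩ := hg
  refine (LipschitzWith.of_dist_le_mul (K := ⟨max C 0, le_max_right _ _⟩)
    fun x z => ?_).continuous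
  rw [Real.dist_eq, dist_eq_norm]
  calc |g x - g z| ≤ C * tnorm d (x - z) := hC x z
    _ ≤ max C 0 * tnorm d (x - z) :=
        mul_le_mul_of_nonneg_right (le_max_left _ _) (tnorm_nonneg _ _)
    _ ≤ max C 0 * ‖x - z‖ := by gcongr; exact tnorm_le_norm _ _

lemma IsLocMod.abs_sub_le {d : ℕ} {r : ℝ} {g h : E d → ℝ} (hmod : IsLocMod d r g h)
    (hh0 : ∀ x, 0 ≤ h x) {x y : E d} (hxy : tnorm d (x - y) < r) :
    |g x - g y| ≤ r * h y :=
  calc |g x - g y| ≤ h y * tnorm d (x - y) := hmod x y hxy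
    _ ≤ h y * r := by gcongr; exact hh0 y
    _ = r * h y := mul_comm _ _

lemma IsLocMod.abs_convM_sub_le {d : ℕ} {r : ℝ} {g h : E d → ℝ} (hmod : IsLocMod d r g h)
    (hh0 : ∀ x, 0 ≤ h x) {ν : Measure (E d)}
    (hg : ∀ a, Integrable (fun y' => g (a - y')) ν)
    (hh : ∀ a, Integrable (fun y' => h (a - y')) ν)
    {x z : E d} (hxz : tnorm d (x - z) < r) :
    |convM d g ν x - convM d g ν z| ≤ r * convM d h ν z := by
  have hpt : ∀ y', |g (x - y') - g (z - y')| ≤ r * h (z - y') := fun y' =>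
    hmod.abs_sub_le hh0 (by rwa [sub_sub_sub_cancel_right])
  unfold convM
  rw [← integral_sub (hg x) (hg z), ← integral_const_mul]
  calc |∫ y', (g (x - y') - g (z - y')) ∂ν|
      ≤ ∫ y', |g (x - y') - g (z - y')| ∂ν := abs_integral_le_integral_abs
    _ ≤ ∫ y', r * h (z - y') ∂ν :=
        integral_mono ((hg x).sub (hg z)).abs ((hh z).const_mul r) hpt

lemma abs_sub_sum_mul_le {ι : Type*} (s : Finset ι) {w a B : ι → ℝ} {F : ℝ}
    (hw0 : ∀ i ∈ s, 0 ≤ w i) (hw1 : ∑ i ∈ s, w i = 1)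
    (hB : ∀ i ∈ s, w i ≠ 0 → |F - a i| ≤ B i) :
    |F - ∑ i ∈ s, a i * w i| ≤ ∑ i ∈ s, w i * B i := by
  have hsplit : F - ∑ i ∈ s, a i * w i = ∑ i ∈ s, w i * (F - a i) :=
    calc F - ∑ i ∈ s, a i * w i = (∑ i ∈ s, w i) * F - ∑ i ∈ s, a i * w i := by
          rw [hw1, one_mul]
      _ = ∑ i ∈ s, w i * (F - a i) := by
        rw [Finset.sum_mul, ← Finset.sum_sub_distrib]
        exact Finset.sum_congr rfl fun i _ => by ring
  rw [hsplit]
  refine (Finset.abs_sum_le_sum_abs _ _).trans (Finset.sum_le_sum fun i hi => ?_)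
  rw [abs_mul, abs_of_nonneg (hw0 i hi)]
  rcases eq_or_ne (w i) 0 with hwi | hwi
  · simp [hwi]
  · exact mul_le_mul_of_nonneg_left (hB i hi hwi) (hw0 i hi)

theorem stmt_8_general (d M : ℕ) (r : ℝ)
    (ν : Measure (E d)) (hν : IsFiniteMeasure ν)
    (ym : Fin M → E d)
    (ζ : Fin M → E d → ℝ)
    (hζ0 : ∀ m x, 0 ≤ ζ m x)
    (hζsupp : ∀ m x, ζ m x ≠ 0 → tnorm d (x - ym m) < r)
    (hζsum : ∀ x, ∑ m, ζ m x = 1)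
    (g h : E d → ℝ) (hgper : TPer g) (hgLip : TLip g)
    (hhper : TPer h) (hh0 : ∀ x, 0 ≤ h x) (hhc : Continuous h)
    (hmod : IsLocMod d r g h) :
    ∀ y : E d,
      |convM d g ν y - ∑ m, convM d g ν (ym m) * ζ m y| ≤ r * convM d h ν y ∧
      |convM d g ν y - ∑ m, convM d g ν (ym m) * ζ m y|
        ≤ r * ∑ m, ζ m y * convM d h ν (ym m) := by
  intro y
  have hconv : ∀ {x z}, tnorm d (x - z) < r →
      |convM d g ν x - convM d g ν z| ≤ r * convM d h ν z :=
    hmod.abs_convM_sub_le hh0 (hgper.integrable_comp_sub hgLip.continuous ν)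
      (hhper.integrable_comp_sub hhc ν)
  constructor
  · have := abs_sub_sum_mul_le Finset.univ (B := fun _ => r * convM d h ν y)
      (fun m _ => hζ0 m y) (hζsum y) fun m _ hm => by
        rw [abs_sub_comm]
        exact hconv (by rw [tnorm_sub_comm]; exact hζsupp m y hm)
    rwa [← Finset.sum_mul, hζsum, one_mul] at this
  · have := abs_sub_sum_mul_le Finset.univ (B := fun m => r * convM d h ν (ym m))
      (fun m _ => hζ0 m y) (hζsum y) fun m _ hm => hconv (hζsupp m y hm)
    simpa only [Finset.mul_sum, mul_left_comm r] using this

/-- Interpolation error bounds for convolutions via a partition of unity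
subordinate to a cover of the torus by balls B_r(y_m):
|g∗ν(y) − Σ_m g∗ν(y_m) ζ_m(y)| ≤ r (h∗ν)(y) and ≤ r Σ_m ζ_m(y) (h∗ν)(y_m). -/
theorem stmt_8 (d M : ℕ) (hd : 1 ≤ d) (r : ℝ) (hr : 0 < r)
    (ν : Measure (E d)) (hν : IsFiniteMeasure ν)
    (ym : Fin M → E d) (hcover : ∀ x : E d, ∃ m, tnorm d (x - ym m) < r)
    (ζ : Fin M → E d → ℝ)
    (hζper : ∀ m, TPer (ζ m)) (hζc : ∀ m, Continuous (ζ m)) (hζ0 : ∀ m x, 0 ≤ ζ m x)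
    (hζsupp : ∀ m x, ζ m x ≠ 0 → tnorm d (x - ym m) < r)
    (hζsum : ∀ x, ∑ m, ζ m x = 1)
    (g h : E d → ℝ) (hgper : TPer g) (hgLip : TLip g)
    (hhper : TPer h) (hh0 : ∀ x, 0 ≤ h x) (hhc : Continuous h)
    (hmod : IsLocMod d r g h) :
    ∀ y : E d,
      |convM d g ν y - ∑ m, convM d g ν (ym m) * ζ m y| ≤ r * convM d h ν y ∧
      |convM d g ν y - ∑ m, convM d g ν (ym m) * ζ m y|
        ≤ r * ∑ m, ζ m y * convM d h ν (ym m) :=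
  stmt_8_general d M r ν hν ym ζ hζ0 hζsupp hζsum g h hgper hgLip hhper hh0 hhc hmod
end
end

section
/- Let d ≥ 1 and r > 0. Let ν₁, ν₂ be finite nonnegative Borel measures on 𝕋^d, and let {y_m}_{m=1}^M ⊂ 𝕋^d be points such that 𝕋^d ⊆ ∪_{m=1}^M B_r(y_m). Let g : 𝕋^d → ℝ be Lipschitz with a continuous r-local Lipschitz modulus h : 𝕋^d → [0,∞). Then ‖g ∗ ν₁ − g ∗ ν₂‖_{L^∞(𝕋^d)} ≤ 2r ‖h ∗ ν₁‖_{L^∞(𝕋^d)} + sup_{1≤m≤M} |g ∗ ν₁(y_m) − g ∗ ν₂(y_m)| + r · sup_{1≤m≤M} |h ∗ ν₁(y_m) − h ∗ ν₂(y_m)|. -/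
open MeasureTheory Real Set
open scoped ENNReal BigOperators

noncomputable section

def unitCube (d : ℕ) : Set (E d) := WithLp.toLp 2 '' Set.univ.pi fun _ => Icc 0 1

lemma isCompact_unitCube (d : ℕ) : IsCompact (unitCube d) :=
  (isCompact_univ_pi fun _ => isCompact_Icc).image (PiLp.continuous_toLp 2 _)

lemma exists_add_latVec_mem_unitCube {d : ℕ} (x : E d) :
    ∃ k, x + latVec d k ∈ unitCube d := by
  refine ⟨fun i => -⌊x i⌋, _, fun i _ => ⟨Int.fract_nonneg (x i), (Int.fract_lt_one (x i)).le⟩, ?_⟩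
  ext i
  simp [latVec, Int.fract, sub_eq_add_neg]

lemma TPer.exists_abs_le {d : ℕ} {f : E d → ℝ} (hper : TPer f) (hf : Continuous f) :
    ∃ C, ∀ x, |f x| ≤ C := by
  obtain ⟨C, hC⟩ := (isCompact_unitCube d).exists_bound_of_continuousOn hf.continuousOn
  refine ⟨C, fun x => ?_⟩
  obtain ⟨k, hk⟩ := exists_add_latVec_mem_unitCube x
  simpa [hper x k] using hC _ hk

section Convolution

variable {d : ℕ} {f : E d → ℝ} {C : ℝ} (ν : Measure (E d)) [IsFiniteMeasure ν]

lemma integrable_comp_sub_of_abs_le (hf : Continuous f) (hC : ∀ x, |f x| ≤ C) (z : E d) :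
    Integrable (fun y' => f (z - y')) ν :=
  (integrable_const C).mono' (hf.comp (continuous_const.sub continuous_id)).aestronglyMeasurable
    (ae_of_all _ fun y' => hC (z - y'))

lemma bddAbove_range_convM (hC : ∀ x, |f x| ≤ C) : BddAbove (range (convM d f ν)) :=
  ⟨C * ν.real univ, by
    rintro _ ⟨x, rfl⟩
    exact (le_abs_self _).trans (norm_integral_le_of_norm_le_const (f := fun y' => f (x - y'))
      (ae_of_all ν fun y' => hC (x - y')))⟩

end Convolution

lemma convM_nonneg {d : ℕ} {h : E d → ℝ} (hh0 : ∀ x, 0 ≤ h x) (ν : Measure (E d)) (z : E d) :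
    0 ≤ convM d h ν z :=
  integral_nonneg fun _ => hh0 _

lemma abs_convM_sub_convM_le_of_isLocMod {d : ℕ} {r : ℝ} {g h : E d → ℝ} {ν : Measure (E d)}
    (hmod : IsLocMod d r g h) (hg : ∀ z, Integrable (fun y' => g (z - y')) ν)
    (hh : ∀ z, Integrable (fun y' => h (z - y')) ν) {y z : E d} (hyz : tnorm d (y - z) < r) :
    |convM d g ν y - convM d g ν z| ≤ tnorm d (y - z) * convM d h ν z := by
  rw [convM, convM, ← integral_sub (hg y) (hg z), convM, ← integral_const_mul]
  refine (abs_integral_le_integral_abs).trans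
    (integral_mono ((hg y).sub (hg z)).abs ((hh z).const_mul _) fun y' => ?_)
  have hloc := hmod (y - y') (z - y') (by rwa [sub_sub_sub_cancel_right])
  rwa [sub_sub_sub_cancel_right, mul_comm] at hloc

lemma abs_convM_sub_convM_le_of_tnorm_lt {d : ℕ} {r : ℝ} {g h : E d → ℝ}
    {ν₁ ν₂ : Measure (E d)} (hmod : IsLocMod d r g h) (hh0 : ∀ x, 0 ≤ h x)
    (hg₁ : ∀ z, Integrable (fun y' => g (z - y')) ν₁)
    (hh₁ : ∀ z, Integrable (fun y' => h (z - y')) ν₁)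
    (hg₂ : ∀ z, Integrable (fun y' => g (z - y')) ν₂)
    (hh₂ : ∀ z, Integrable (fun y' => h (z - y')) ν₂) {y z : E d} (hyz : tnorm d (y - z) < r) :
    |convM d g ν₁ y - convM d g ν₂ y|
      ≤ 2 * r * convM d h ν₁ z + |convM d g ν₁ z - convM d g ν₂ z|
        + r * |convM d h ν₁ z - convM d h ν₂ z| := by
  have hr : 0 ≤ r := (tnorm_nonneg d _).trans hyz.le
  have h₁ : |convM d g ν₁ y - convM d g ν₁ z| ≤ r * convM d h ν₁ z :=
    (abs_convM_sub_convM_le_of_isLocMod hmod hg₁ hh₁ hyz).trans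
      (mul_le_mul_of_nonneg_right hyz.le (convM_nonneg hh0 ν₁ z))
  have h₂ : |convM d g ν₂ y - convM d g ν₂ z| ≤ r * convM d h ν₂ z :=
    (abs_convM_sub_convM_le_of_isLocMod hmod hg₂ hh₂ hyz).trans
      (mul_le_mul_of_nonneg_right hyz.le (convM_nonneg hh0 ν₂ z))
  have hh : convM d h ν₂ z ≤ convM d h ν₁ z + |convM d h ν₁ z - convM d h ν₂ z| := by
    linarith [neg_abs_le (convM d h ν₁ z - convM d h ν₂ z)]
  calc |convM d g ν₁ y - convM d g ν₂ y|
      ≤ |convM d g ν₁ y - convM d g ν₁ z| + |convM d g ν₁ z - convM d g ν₂ z|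
          + |convM d g ν₂ y - convM d g ν₂ z| := by
        rw [abs_sub_comm (convM d g ν₂ y)]
        exact (abs_sub_le _ _ _).trans (add_le_add_left (abs_sub_le _ _ _) _)
    _ ≤ _ := by linarith [mul_le_mul_of_nonneg_left hh hr]

theorem stmt_9_general (d M : ℕ) (r : ℝ) (hr : 0 < r)
    (ν₁ ν₂ : Measure (E d)) (hν₁ : IsFiniteMeasure ν₁) (hν₂ : IsFiniteMeasure ν₂)
    (ym : Fin M → E d) (hcover : ∀ x : E d, ∃ m, tnorm d (x - ym m) < r)
    (g h : E d → ℝ) (hgper : TPer g) (hgLip : TLip g)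
    (hhper : TPer h) (hh0 : ∀ x, 0 ≤ h x) (hhc : Continuous h)
    (hmod : IsLocMod d r g h) :
    ∀ y : E d,
      |convM d g ν₁ y - convM d g ν₂ y|
        ≤ 2 * r * (⨆ x : E d, convM d h ν₁ x)
          + (⨆ m, |convM d g ν₁ (ym m) - convM d g ν₂ (ym m)|)
          + r * (⨆ m, |convM d h ν₁ (ym m) - convM d h ν₂ (ym m)|) := by
  obtain ⟨Cg, hCg⟩ := hgper.exists_abs_le hgLip.continuous
  obtain ⟨Ch, hCh⟩ := hhper.exists_abs_le hhc
  intro y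
  obtain ⟨m, hm⟩ := hcover y
  have hsup_h : convM d h ν₁ (ym m) ≤ ⨆ x, convM d h ν₁ x :=
    le_ciSup (bddAbove_range_convM ν₁ hCh) (ym m)
  have hsup_g := le_ciSup (Set.finite_range
    fun m => |convM d g ν₁ (ym m) - convM d g ν₂ (ym m)|).bddAbove m
  have hsup_h' := le_ciSup (Set.finite_range
    fun m => |convM d h ν₁ (ym m) - convM d h ν₂ (ym m)|).bddAbove m
  calc |convM d g ν₁ y - convM d g ν₂ y|
      ≤ 2 * r * convM d h ν₁ (ym m) + |convM d g ν₁ (ym m) - convM d g ν₂ (ym m)|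
          + r * |convM d h ν₁ (ym m) - convM d h ν₂ (ym m)| :=
        abs_convM_sub_convM_le_of_tnorm_lt hmod hh0
          (integrable_comp_sub_of_abs_le ν₁ hgLip.continuous hCg)
          (integrable_comp_sub_of_abs_le ν₁ hhc hCh)
          (integrable_comp_sub_of_abs_le ν₂ hgLip.continuous hCg)
          (integrable_comp_sub_of_abs_le ν₂ hhc hCh) hm
    _ ≤ _ := by gcongr

/-- Reduction of L^∞ convergence of convolutions to a finite mesh:
‖g∗ν₁ − g∗ν₂‖_{L^∞} ≤ 2r ‖h∗ν₁‖_{L^∞} + sup_m |g∗ν₁(y_m) − g∗ν₂(y_m)|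
+ r sup_m |h∗ν₁(y_m) − h∗ν₂(y_m)|.  (For continuous periodic data the L^∞ norms
coincide with pointwise suprema.) -/
theorem stmt_9 (d M : ℕ) (hd : 1 ≤ d) (r : ℝ) (hr : 0 < r)
    (ν₁ ν₂ : Measure (E d)) (hν₁ : IsFiniteMeasure ν₁) (hν₂ : IsFiniteMeasure ν₂)
    (ym : Fin M → E d) (hcover : ∀ x : E d, ∃ m, tnorm d (x - ym m) < r)
    (g h : E d → ℝ) (hgper : TPer g) (hgLip : TLip g)
    (hhper : TPer h) (hh0 : ∀ x, 0 ≤ h x) (hhc : Continuous h)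
    (hmod : IsLocMod d r g h) :
    ∀ y : E d,
      |convM d g ν₁ y - convM d g ν₂ y|
        ≤ 2 * r * (⨆ x : E d, convM d h ν₁ x)
          + (⨆ m, |convM d g ν₁ (ym m) - convM d g ν₂ (ym m)|)
          + r * (⨆ m, |convM d h ν₁ (ym m) - convM d h ν₂ (ym m)|) :=
  stmt_9_general d M r hr ν₁ ν₂ hν₁ hν₂ ym hcover g h hgper hgLip hhper hh0 hhc hmod
end
end

section
/- Let x, y ∈ (0, 1/e) and suppose x ≤ y·|log y|^{−1/2}, where |log y| = −log y. Then x·|log x| ≤ (3/2)·y·|log y|^{1/2}. -/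
open Real Set

lemma mono_aux : StrictMonoOn (fun t => t * (-Real.log t)) (Set.Ioo (0:ℝ) (1/Real.exp 1)) := by
  have : (fun t : ℝ => t * (-Real.log t)) = fun t => -(t * Real.log t) := by
    ext t; ring
  rw [this]
  apply strictMonoOn_of_deriv_pos (convex_Ioo _ _)
  · apply ContinuousOn.neg
    exact continuousOn_id.mul (Real.continuousOn_log.mono (fun t ht => by
      simp only [Set.mem_compl_iff, Set.mem_singleton_iff]
      exact ht.1.ne'))
  · intro t ht
    rw [interior_Ioo] at ht
    obtain ⟨ht0, ht1⟩ := ht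
    have hd : HasDerivAt (fun t : ℝ => -(t * Real.log t)) (-(Real.log t + 1)) t :=
      (Real.hasDerivAt_mul_log ht0.ne').neg
    rw [hd.deriv]
    have : Real.log t < -1 := by
      have := Real.log_lt_log ht0 ht1
      rwa [one_div, Real.log_inv, Real.log_exp] at this
    linarith

/-- If x, y ∈ (0, 1/e) and x ≤ y·|log y|^{−1/2}, then
x·|log x| ≤ (3/2)·y·|log y|^{1/2}, with |log z| = −log z. -/
theorem stmt_16 (x y : ℝ)
    (hx : x ∈ Set.Ioo (0:ℝ) (1/Real.exp 1))
    (hy : y ∈ Set.Ioo (0:ℝ) (1/Real.exp 1))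
    (hxy : x ≤ y / Real.sqrt (-Real.log y)) :
    x * (-Real.log x) ≤ (3/2) * (y * Real.sqrt (-Real.log y)) := by
  obtain ⟨hx0, hx1⟩ := hx
  obtain ⟨hy0, hy1⟩ := hy
  have hlogy : Real.log y < -1 := by
    have := Real.log_lt_log hy0 hy1
    rwa [one_div, Real.log_inv, Real.log_exp] at this
  set L := -Real.log y with hLdef
  have hL1 : 1 < L := by simp only [hLdef]; linarith
  have hL0 : 0 < L := by linarith
  have hsL1 : 1 < Real.sqrt L := by
    rw [show (1:ℝ) = Real.sqrt 1 by simp]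
    exact Real.sqrt_lt_sqrt (by norm_num) hL1
  have hsL0 : 0 < Real.sqrt L := by linarith
  have hsq : Real.sqrt L * Real.sqrt L = L := Real.mul_self_sqrt hL0.le
  set z := y / Real.sqrt L with hz
  have hz0 : 0 < z := div_pos hy0 hsL0
  have hzy : z < y := by
    rw [hz, div_lt_iff₀ hsL0]; nlinarith
  have hz1 : z < 1 / Real.exp 1 := hzy.trans hy1
  have hlogz : -Real.log z = L + Real.log L / 2 := by
    rw [hz, Real.log_div hy0.ne' hsL0.ne', Real.log_sqrt hL0.le]
    simp only [hLdef]; ring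
  have step1 : x * (-Real.log x) ≤ z * (-Real.log z) := by
    rcases eq_or_lt_of_le hxy with h | h
    · rw [h]
    · exact (mono_aux ⟨hx0, hx1⟩ ⟨hz0, hz1⟩ h).le
  have hlogL : Real.log L ≤ L - 1 := Real.log_le_sub_one_of_pos hL0
  have step2 : z * (-Real.log z) ≤ (3/2) * (y * Real.sqrt L) := by
    rw [hlogz, hz, div_mul_eq_mul_div, div_le_iff₀ hsL0]
    nlinarith [mul_pos hy0 hL0]
  linarith
end
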